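/- Let A = (none, all) and B = (explicit, trivial). Under causal arbitration (admissibility evaluated only against strict linear orders ≺ refining E), A ⪯ B: on every finite labeled causal DAG, every cut that is a ≺-initial segment (A-admissible, since deps_none imposes nothing) is closed under deps_explicit and hence B-admissible. However the product-order condition fails: there exists a finite labeled causal DAG and a message m with deps_explicit(m) ⊄ deps_none(m) = ∅ (e.g. a single edge). Hence the readability order ⪯ is strictly coarser than the product order (deps_{C_A} ⊇ deps_{C_B} pointwise on all DAGs, and O_A ≥ O_B). -/
import Mathlib


/-- Closure scopes. -/
inductive CScope
  | none | object | session | explicit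
deriving DecidableEq

/-- Ordering scopes. -/
inductive OScope
  | trivial | object | all
deriving DecidableEq

/-- A finite labeled causal DAG: a finite type of messages with an irreflexive
acyclic edge relation and object/session labels. -/
structure LDag where
  M : Type
  [fin : Fintype M]
  O0 : Type
  S0 : Type
  E : M → M → Prop
  irr : Irreflexive E
  acyc : Irreflexive (Relation.TransGen E)
  obj : M → O0
  sess : M → S0

/-- The closure filters `deps_C`. -/
def LDag.deps (G : LDag) : CScope → G.M → Set G.M
  | .none, _ => ∅
  | .object, m => {m' | G.E m' m ∧ G.obj m' = G.obj m}
  | .session, m => {m' | G.E m' m ∧ G.sess m' = G.sess m}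
  | .explicit, m => {m' | G.E m' m}

/-- Same-class relation of an ordering scope. -/
def LDag.sameClass (G : LDag) : OScope → G.M → G.M → Prop
  | .trivial, a, b => a = b
  | .object, a, b => G.obj a = G.obj b
  | .all, _, _ => True

/-- `V` is closed under the filter `deps_C`. -/
def LDag.closedUnder (G : LDag) (C : CScope) (V : Set G.M) : Prop :=
  ∀ m ∈ V, G.deps C m ⊆ V

/-- `V` is a per-class prefix for the ordering scope `O` w.r.t. `prec`. -/
def LDag.isPrefix (G : LDag) (O : OScope) (prec : G.M → G.M → Prop) (V : Set G.M) : Prop :=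
  ∀ m ∈ V, ∀ m', G.sameClass O m' m → prec m' m → m' ∈ V

/-- A cut `V` is admissible under the configuration `(C, O)` w.r.t. `(E, prec)`. -/
def LDag.admissible (G : LDag) (prec : G.M → G.M → Prop) (C : CScope) (O : OScope)
    (V : Set G.M) : Prop :=
  G.closedUnder C V ∧ G.isPrefix O prec V

/-- `prec` refines the causal order (causal arbitration). -/
def LDag.refines (G : LDag) (prec : G.M → G.M → Prop) : Prop :=
  ∀ m' m, G.E m' m → prec m' m

/-- A configuration is a pair of a closure scope and an ordering scope. -/
abbrev Config := CScope × OScope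

/-- Readability under causal arbitration: every `A`-admissible cut is
`B`-admissible, on every finite labeled causal DAG and every strict linear
order refining the causal edges. -/
def Readable (A B : Config) : Prop :=
  ∀ G : LDag, ∀ prec : G.M → G.M → Prop,
    IsStrictTotalOrder G.M prec → G.refines prec →
    ∀ V : Set G.M, G.admissible prec A.1 A.2 V → G.admissible prec B.1 B.2 V

/-- The chain `trivial < object < all` on ordering scopes, as a rank. -/
def OScope.rank : OScope → ℕ
  | .trivial => 0
  | .object => 1
  | .all => 2

/-- The κ map: the closure entailed by an ordering scope. -/
def kappa : OScope → CScope
  | .trivial => .none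
  | .object => .object
  | .all => .explicit

/-- The product-order condition on configurations: `O_A ≥ O_B` in the chain and
`deps_{C_A} ⊇ deps_{C_B}` pointwise on every finite labeled causal DAG. -/
def ProductLe (A B : Config) : Prop :=
  B.2.rank ≤ A.2.rank ∧
    ∀ G : LDag, ∀ m : G.M, G.deps B.1 m ⊆ G.deps A.1 m

def edgeDag : LDag where
  M := Bool
  O0 := Unit
  S0 := Unit
  E := fun a b => a = false ∧ b = true
  irr := by rintro a ⟨h1, h2⟩; simp [h1] at h2
  acyc := by
    have key : ∀ a b, Relation.TransGen (fun a b : Bool => a = false ∧ b = true) a b →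
        a = false ∧ b = true := by
      intro a b h
      induction h with
      | single h => exact h
      | tail _ h ih => exact ⟨ih.1, h.2⟩
    intro a h
    have := key a a h
    simp [this.1] at this
  obj := fun _ => ()
  sess := fun _ => ()

/-- **κ-shortcut.** Under causal arbitration,
`(none, all) ⪯ (explicit, trivial)`, yet the product-order condition fails
(there is a DAG and a message whose explicit dependencies are not contained in
the empty filter).  Hence readability is strictly coarser than the product
order. -/
theorem kappa_shortcut :
    Readable (CScope.none, OScope.all) (CScope.explicit, OScope.trivial) ∧
    (∃ G : LDag, ∃ m : G.M, ¬ G.deps CScope.explicit m ⊆ G.deps CScope.none m) ∧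
    ¬ ProductLe (CScope.none, OScope.all) (CScope.explicit, OScope.trivial) := by
  refine ⟨?_, ?_, ?_⟩
  · intro G prec hsto href V ⟨_, hpre⟩
    constructor
    · intro m hm m' hm'
      exact hpre m hm m' trivial (href m' m hm')
    · intro m hm m' he _
      cases he; exact hm
  · refine ⟨edgeDag, true, ?_⟩
    intro h
    have : (false : Bool) ∈ (edgeDag.deps CScope.none true) :=
      h (by exact ⟨rfl, rfl⟩)
    exact this
  · rintro ⟨_, h⟩
    have : (false : Bool) ∈ (edgeDag.deps CScope.none true) :=
      h edgeDag true (by exact ⟨rfl, rfl⟩)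
    exact this
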